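/- Let d2, a2, h > 0, x2 > 0, and 0 < q1 < q2. Suppose w1 is a solution of the downstream toxicant boundary value problem on [0, x2] with degradation rate q1 and w2 is a solution with degradation rate q2 (all other parameters d2, a2, h equal). Then w2(x) < w1(x) for every x ∈ (0, x2). (The solution of the downstream problem is strictly decreasing with respect to q.) -/

import Mathlib

open Set Filter Topology

/-- Extract differentiability facts from `ContDiff ℝ 2`. -/
lemma two_diff {w : ℝ → ℝ} (hw : ContDiff ℝ 2 w) :
    Differentiable ℝ w ∧ Differentiable ℝ (deriv w) := by
  have h2 : ContDiff ℝ ((1 : ℕ) + 1) w := by exact_mod_cast hw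
  rw [contDiff_succ_iff_deriv] at h2
  exact ⟨h2.1, h2.2.2.differentiable (by simp)⟩

/-- A weak maximum principle: if `g` vanishes at the endpoints and at every interior
critical point with positive value the second derivative is positive, then `g ≤ 0`. -/
lemma neg_of_maxPrinciple (x2 : ℝ) (hx2 : 0 < x2) (g : ℝ → ℝ)
    (hg : Differentiable ℝ g)
    (h0 : g 0 = 0) (h2 : g x2 = 0)
    (hkey : ∀ x ∈ Set.Ioo (0:ℝ) x2, deriv g x = 0 → 0 < g x → 0 < deriv (deriv g) x) :
    ∀ x ∈ Set.Icc (0:ℝ) x2, g x ≤ 0 := by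
  by_contra hcon
  push_neg at hcon
  obtain ⟨y, hy, hgy⟩ := hcon
  obtain ⟨x0, hx0, hmax⟩ := isCompact_Icc.exists_isMaxOn
    (Set.nonempty_Icc.mpr hx2.le) hg.continuous.continuousOn
  have hgx0 : 0 < g x0 := lt_of_lt_of_le hgy (hmax hy)
  have hx0i : x0 ∈ Set.Ioo (0:ℝ) x2 := by
    have hne0 : x0 ≠ 0 := fun he => by rw [he, h0] at hgx0; exact lt_irrefl 0 hgx0
    have hne2 : x0 ≠ x2 := fun he => by rw [he, h2] at hgx0; exact lt_irrefl 0 hgx0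
    exact ⟨lt_of_le_of_ne hx0.1 (Ne.symm hne0), lt_of_le_of_ne hx0.2 hne2⟩
  have hloc : IsLocalMax g x0 := hmax.isLocalMax (Icc_mem_nhds hx0i.1 hx0i.2)
  have hd0 : deriv g x0 = 0 := hloc.deriv_eq_zero
  have hpos := hkey x0 hx0i hd0 hgx0
  have hdd : DifferentiableAt ℝ (deriv g) x0 :=
    differentiableAt_of_deriv_ne_zero (ne_of_gt hpos)
  have hT : Tendsto (slope (deriv g) x0) (𝓝[≠] x0) (𝓝 (deriv (deriv g) x0)) :=
    hasDerivAt_iff_tendsto_slope.mp hdd.hasDerivAt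
  have hev : ∀ᶠ x in 𝓝[>] x0, 0 < slope (deriv g) x0 x :=
    (hT.mono_left (nhdsWithin_mono x0 (fun y hy => ne_of_gt hy))).eventually
      (eventually_gt_nhds hpos)
  have hev2 : ∀ᶠ x in 𝓝[>] x0, 0 < deriv g x ∧ x < x2 := by
    filter_upwards [hev, Ioo_mem_nhdsGT_of_mem (Set.mem_Ico.mpr ⟨le_refl x0, hx0i.2⟩)]
      with x hx hx'
    rw [slope_def_field] at hx
    have hB : 0 < x - x0 := sub_pos.mpr hx'.1
    have hA : 0 < deriv g x - deriv g x0 := by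
      by_contra hneg
      push_neg at hneg
      have := div_nonpos_of_nonpos_of_nonneg hneg hB.le
      linarith
    exact ⟨by linarith [hd0 ▸ hA], hx'.2⟩
  obtain ⟨b, hb, hsub⟩ := mem_nhdsGT_iff_exists_Ioo_subset.mp hev2
  set m := (x0 + b) / 2 with hm
  have hmI : m ∈ Set.Ioo x0 b := ⟨by simp only [hm]; linarith [Set.mem_Ioi.mp hb],
    by simp only [hm]; linarith [Set.mem_Ioi.mp hb]⟩
  have hprop := hsub hmI
  have hmono : StrictMonoOn g (Set.Icc x0 m) :=
    strictMonoOn_of_deriv_pos (convex_Icc x0 m) hg.continuous.continuousOn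
      (by rw [interior_Icc]; intro z hz; exact (hsub ⟨hz.1, lt_trans hz.2 hmI.2⟩).1)
  have hlt : g x0 < g m :=
    hmono (Set.left_mem_Icc.mpr hmI.1.le) (Set.right_mem_Icc.mpr hmI.1.le) hmI.1
  have hmIcc : m ∈ Set.Icc (0:ℝ) x2 := ⟨(lt_trans hx0i.1 hmI.1).le, hprop.2.le⟩
  exact absurd (hmax hmIcc) (not_le.mpr hlt)

/-- At a right endpoint where `g` attains the value `0` and `g ≤ 0` on the interval,
the derivative is nonnegative. -/
lemma deriv_nonneg_at_right (x2 : ℝ) (hx2 : 0 < x2) (g : ℝ → ℝ)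
    (hdiff : DifferentiableAt ℝ g x2) (h2 : g x2 = 0)
    (hle : ∀ x ∈ Set.Icc (0:ℝ) x2, g x ≤ 0) : 0 ≤ deriv g x2 := by
  have hT : Tendsto (slope g x2) (𝓝[<] x2) (𝓝 (deriv g x2)) :=
    (hasDerivAt_iff_tendsto_slope.mp hdiff.hasDerivAt).mono_left
      (nhdsWithin_mono x2 fun y hy => ne_of_lt hy)
  refine ge_of_tendsto hT ?_
  filter_upwards [Ioo_mem_nhdsLT_of_mem (Set.mem_Ioc.mpr ⟨hx2, le_refl x2⟩)] with x hx
  rw [slope_def_field]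
  apply div_nonneg_of_nonpos
  · rw [h2, sub_zero]; exact hle x ⟨hx.1.le, hx.2.le⟩
  · linarith [hx.2]

/-- Key positivity lemma for the downstream operator with a positive forcing term. -/
lemma key_positivity (d2 a2 q x2 : ℝ) (w r : ℝ → ℝ)
    (hd2 : 0 < d2) (ha2 : 0 < a2) (hq : 0 < q) (hx2 : 0 < x2)
    (hw : ContDiff ℝ 2 w) (hrdiff : Differentiable ℝ r)
    (heq : ∀ x ∈ Set.Icc (0:ℝ) x2,
      d2 * deriv (deriv w) x - a2 * deriv w x - q * w x + r x = 0)
    (hb0 : d2 * deriv w 0 - a2 * w 0 = 0) (hb2 : d2 * deriv w x2 - a2 * w x2 = 0)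
    (hrpos2 : 0 < r x2)
    (hrcond : ∀ x ∈ Set.Icc (0:ℝ) x2, 0 ≤ a2 * r x - d2 * deriv r x) :
    (∀ x ∈ Set.Icc (0:ℝ) x2, 0 < w x) ∧
      (∀ x ∈ Set.Icc (0:ℝ) x2, d2 * deriv w x - a2 * w x ≤ 0) := by
  obtain ⟨hw1, hw2d⟩ := two_diff hw
  set g : ℝ → ℝ := fun x => d2 * deriv w x - a2 * w x with hgdef
  have hgdiff : Differentiable ℝ g := (hw2d.const_mul d2).sub (hw1.const_mul a2)
  have hgderiv : ∀ x, deriv g x = d2 * deriv (deriv w) x - a2 * deriv w x := by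
    intro x
    simp only [hgdef]
    rw [deriv_fun_sub ((hw2d x).const_mul d2) ((hw1 x).const_mul a2),
      deriv_const_mul d2 (hw2d x), deriv_const_mul a2 (hw1 x)]
  have hgIcc : ∀ x ∈ Set.Icc (0:ℝ) x2, deriv g x = q * w x - r x := by
    intro x hx; rw [hgderiv x]; linarith [heq x hx]
  have hgle : ∀ x ∈ Set.Icc (0:ℝ) x2, g x ≤ 0 := by
    apply neg_of_maxPrinciple x2 hx2 g hgdiff hb0 hb2
    intro x hxI hder hpos
    have hxIcc : x ∈ Set.Icc (0:ℝ) x2 := ⟨hxI.1.le, hxI.2.le⟩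
    have hEq : deriv g =ᶠ[𝓝 x] fun y => q * w y - r y := by
      filter_upwards [Ioo_mem_nhds hxI.1 hxI.2] with y hy
      exact hgIcc y ⟨hy.1.le, hy.2.le⟩
    have hddx : deriv (deriv g) x = q * deriv w x - deriv r x := by
      rw [hEq.deriv_eq, deriv_fun_sub ((hw1 x).const_mul q) (hrdiff x),
        deriv_const_mul q (hw1 x)]
    have h1 : q * w x - r x = 0 := by rw [← hgIcc x hxIcc]; exact hder
    have h2c := hrcond x hxIcc
    have h3 : d2 * (q * deriv w x - deriv r x)
        = q * g x + (a2 * r x - d2 * deriv r x) := by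
      simp only [hgdef]
      linear_combination a2 * h1
    rw [hddx]
    nlinarith [mul_pos hq hpos]
  have hgx2 : g x2 = 0 := hb2
  have hdg2 : (0:ℝ) ≤ deriv g x2 :=
    deriv_nonneg_at_right x2 hx2 g (hgdiff x2) hgx2 hgle
  have hwx2 : 0 < w x2 := by
    have hgi := hgIcc x2 (Set.mem_Icc.mpr ⟨hx2.le, le_refl x2⟩)
    nlinarith
  set c : ℝ := -(a2 / d2) with hc
  set v : ℝ → ℝ := fun x => Real.exp (c * x) * w x with hv
  have hvd : ∀ x, HasDerivAt v (Real.exp (c * x) * c * w x + Real.exp (c * x) * deriv w x) x := by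
    intro x
    have he : HasDerivAt (fun y : ℝ => Real.exp (c * y)) (Real.exp (c * x) * (c * 1)) x :=
      HasDerivAt.exp ((hasDerivAt_id x).const_mul c)
    have := he.mul (hw1 x).hasDerivAt
    simp only [mul_one] at this; exact this
  have hvdiff : Differentiable ℝ v := fun x => (hvd x).differentiableAt
  have hvderiv : ∀ x, deriv v x = Real.exp (c * x) * c * w x + Real.exp (c * x) * deriv w x :=
    fun x => (hvd x).deriv
  have hanti : AntitoneOn v (Set.Icc (0:ℝ) x2) := by
    apply antitoneOn_of_deriv_nonpos (convex_Icc 0 x2) hvdiff.continuous.continuousOn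
      hvdiff.differentiableOn
    rw [interior_Icc]
    intro x hx
    rw [hvderiv x]
    have hgx := hgle x ⟨hx.1.le, hx.2.le⟩
    simp only [hgdef] at hgx
    have hfield : Real.exp (c * x) * c * w x + Real.exp (c * x) * deriv w x
        = Real.exp (c * x) * ((d2 * deriv w x - a2 * w x) / d2) := by
      rw [hc]; field_simp; ring
    rw [hfield]
    apply mul_nonpos_of_nonneg_of_nonpos (Real.exp_pos _).le
    exact div_nonpos_of_nonpos_of_nonneg hgx hd2.le
  have hwpos : ∀ x ∈ Set.Icc (0:ℝ) x2, 0 < w x := by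
    intro x hx
    have hvge : v x2 ≤ v x := hanti hx (Set.mem_Icc.mpr ⟨hx2.le, le_refl x2⟩) hx.2
    have hvx2 : 0 < v x2 := by
      simp only [hv]; exact mul_pos (Real.exp_pos _) hwx2
    have hvx : 0 < v x := lt_of_lt_of_le hvx2 hvge
    simp only [hv] at hvx
    by_contra hneg
    push_neg at hneg
    have := mul_nonpos_of_nonneg_of_nonpos (Real.exp_pos (c * x)).le hneg
    linarith
  exact ⟨hwpos, hgle⟩

/-- `w` is a solution of the downstream toxicant boundary value problem with
parameters `d2, a2, h, q` on the interval `[0, x2]`. -/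
def IsDownstreamSolution (d2 a2 h q x2 : ℝ) (w : ℝ → ℝ) : Prop :=
  ContDiff ℝ 2 w ∧
  (∀ x ∈ Set.Icc (0 : ℝ) x2,
      d2 * deriv (deriv w) x - a2 * deriv w x + h - q * w x = 0) ∧
  d2 * deriv w 0 - a2 * w 0 = 0 ∧ d2 * deriv w x2 - a2 * w x2 = 0

/-- the solution of the downstream problem is strictly
decreasing with respect to the degradation rate `q`. -/
theorem downstream_antitone_in_q
    (d2 a2 h x2 q1 q2 : ℝ) (w1 w2 : ℝ → ℝ)
    (hd2 : 0 < d2) (ha2 : 0 < a2) (hh : 0 < h) (hx2 : 0 < x2)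
    (hq1 : 0 < q1) (hq12 : q1 < q2)
    (hw1 : IsDownstreamSolution d2 a2 h q1 x2 w1)
    (hw2 : IsDownstreamSolution d2 a2 h q2 x2 w2) :
    ∀ x ∈ Set.Ioo (0 : ℝ) x2, w2 x < w1 x := by
  obtain ⟨hc1, heq1, hb10, hb12⟩ := hw1
  obtain ⟨hc2, heq2, hb20, hb22⟩ := hw2
  have hq2 : 0 < q2 := lt_trans hq1 hq12
  obtain ⟨h1d, h1d2⟩ := two_diff hc1
  obtain ⟨h2d, h2d2⟩ := two_diff hc2
  -- First: w2 is positive on [0, x2] and g2 := d2*w2' - a2*w2 ≤ 0.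
  obtain ⟨hw2pos, hg2le⟩ := key_positivity d2 a2 q2 x2 w2 (fun _ => h) hd2 ha2 hq2 hx2 hc2
    (differentiable_const h)
    (fun x hx => by linarith [heq2 x hx])
    hb20 hb22 hh
    (fun x hx => by
      simp only [deriv_const']
      nlinarith [mul_pos ha2 hh])
  -- Now study u = w1 - w2.
  set u : ℝ → ℝ := fun x => w1 x - w2 x with hu
  have hcu : ContDiff ℝ 2 u := hc1.sub hc2
  have hud : ∀ x, deriv u x = deriv w1 x - deriv w2 x := by
    intro x; simp only [hu]; exact deriv_sub (h1d x) (h2d x)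
  have hud2 : ∀ x, deriv (deriv u) x = deriv (deriv w1) x - deriv (deriv w2) x := by
    intro x
    have hfun : deriv u = fun y => deriv w1 y - deriv w2 y := funext hud
    rw [hfun, deriv_fun_sub (h1d2 x) (h2d2 x)]
  obtain ⟨hupos, _⟩ := key_positivity d2 a2 q1 x2 u (fun x => (q2 - q1) * w2 x)
    hd2 ha2 hq1 hx2 hcu (h2d.const_mul (q2 - q1))
    (fun x hx => by
      rw [hud2 x, hud x]
      simp only [hu]
      beta_reduce
      linarith [heq1 x hx, heq2 x hx])
    (by rw [hud 0]; simp only [hu]; linarith)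
    (by rw [hud x2]; simp only [hu]; linarith)
    (mul_pos (sub_pos.mpr hq12) (hw2pos x2 (Set.mem_Icc.mpr ⟨hx2.le, le_refl x2⟩)))
    (fun x hx => by
      rw [deriv_const_mul _ (h2d x)]
      beta_reduce
      nlinarith [mul_nonneg (sub_pos.mpr hq12).le
        (by linarith [hg2le x hx] : (0:ℝ) ≤ a2 * w2 x - d2 * deriv w2 x)])
  intro x hx
  have := hupos x ⟨hx.1.le, hx.2.le⟩
  simp only [hu] at this
  linarith
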